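/- A complete lattice L is supercontinuous if and only if it admits a dual basis: a type X together with a family (r_x)_{x ∈ X} of elements of L and a family (σ_x)_{x ∈ X} of predicates σ_x : L → Prop, each preserving arbitrary suprema (for every S ⊆ L, σ_x(sSup S) holds iff σ_x(s) holds for some s ∈ S), such that a = sSup {r_x | x ∈ X and σ_x(a)} for every a ∈ L. -/
import Mathlib


universe u

/-- `b` is totally below `a`: every cover of `a` by a supremum contains a member above `b`. -/
def TotallyBelow {L : Type*} [CompleteLattice L] (b a : L) : Prop :=
  ∀ S : Set L, a ≤ sSup S → ∃ s ∈ S, b ≤ s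

/-- A complete lattice is supercontinuous if every element is the supremum of the elements
totally below it. -/
def Supercontinuous (L : Type*) [CompleteLattice L] : Prop :=
  ∀ a : L, a = sSup {b | TotallyBelow b a}

lemma totallyBelow_le_right {L : Type*} [CompleteLattice L] {b a c : L}
    (h : TotallyBelow b a) (hac : a ≤ c) : TotallyBelow b c :=
  fun S hS => h S (hac.trans hS)

lemma totallyBelow_le_left {L : Type*} [CompleteLattice L] {b c a : L}
    (hbc : b ≤ c) (h : TotallyBelow c a) : TotallyBelow b a :=
  fun S hS => by obtain ⟨s, hs, hcs⟩ := h S hS; exact ⟨s, hs, hbc.trans hcs⟩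

lemma totallyBelow_le {L : Type*} [CompleteLattice L] {b a : L}
    (h : TotallyBelow b a) : b ≤ a := by
  obtain ⟨s, hs, hbs⟩ := h {a} (le_sSup rfl)
  rwa [Set.mem_singleton_iff.mp hs] at hbs

/-- a complete lattice is supercontinuous iff it admits a dual basis:
elements `r x` together with sup-preserving predicates `σ x` such that every `a` is the
supremum of those `r x` with `σ x a`. -/
theorem supercontinuous_iff_dual_basis {L : Type u} [CompleteLattice L] :
    Supercontinuous L ↔
      ∃ (X : Type u) (r : X → L) (σ : X → L → Prop),
        (∀ (x : X) (S : Set L), σ x (sSup S) ↔ ∃ s ∈ S, σ x s) ∧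
        (∀ a : L, a = sSup {l | ∃ x : X, σ x a ∧ l = r x}) := by
  constructor
  · intro hsc
    refine ⟨L, id, fun b a => TotallyBelow b a, ?_, ?_⟩
    · intro b S
      constructor
      · intro h
        -- use supercontinuity: sSup S = sSup of union of totally-below sets
        have hle : sSup S ≤ sSup (⋃ s ∈ S, {c | TotallyBelow c s}) := by
          apply sSup_le
          intro s hs
          calc s = sSup {c | TotallyBelow c s} := hsc s
            _ ≤ _ := sSup_le_sSup (fun c hc => Set.mem_biUnion hs hc)
        obtain ⟨c, hc, hbc⟩ := h _ hle
        simp only [Set.mem_iUnion] at hc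
        obtain ⟨s, hs, hcs⟩ := hc
        exact ⟨s, hs, totallyBelow_le_left hbc hcs⟩
      · rintro ⟨s, hs, hbs⟩
        exact totallyBelow_le_right hbs (le_sSup hs)
    · intro a
      have : {l | ∃ x : L, TotallyBelow x a ∧ l = id x} = {b | TotallyBelow b a} := by
        ext b; simp [eq_comm, and_comm]
      rw [this]; exact hsc a
  · rintro ⟨X, r, σ, hσ, hbasis⟩
    intro a
    have hmono : ∀ x : X, ∀ {u v : L}, σ x u → u ≤ v → σ x v := by
      intro x u v hu huv
      have : σ x (sSup {u, v}) := by
        rw [hσ]; exact ⟨u, by simp, hu⟩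
      rwa [show sSup {u, v} = v by simp [sSup_pair, sup_eq_right.mpr huv]] at this
    apply le_antisymm
    · calc a = sSup {l | ∃ x : X, σ x a ∧ l = r x} := hbasis a
        _ ≤ sSup {b | TotallyBelow b a} := by
            apply sSup_le_sSup
            rintro l ⟨x, hxa, rfl⟩
            intro S hS
            have : σ x (sSup S) := hmono x hxa hS
            rw [hσ] at this
            obtain ⟨s, hs, hxs⟩ := this
            refine ⟨s, hs, ?_⟩
            calc r x ≤ sSup {l | ∃ y : X, σ y s ∧ l = r y} := le_sSup ⟨x, hxs, rfl⟩
              _ = s := (hbasis s).symm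
    · exact sSup_le fun b hb => totallyBelow_le hb
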